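/- Let A be a finite affine hyperplane arrangement in ℂⁿ and let U be a small open convex set with G = Min(U) ∈ L(A). Then the pair (U, U ∩ Σ(A)) is homeomorphic to the pair (ℂⁿ, Σ(A_G)), where A_G := {H ∈ A : G ⊆ H} is the central subarrangement of hyperplanes containing G; in particular U − Σ(A) is homeomorphic to the complement M(A_G) of a central arrangement. -/

import Mathlib

open CategoryTheory

abbrev Vc (n : ℕ) := Fin n → ℂ

def IsHyperplane {n : ℕ} (H : AffineSubspace ℂ (Vc n)) : Prop :=
  (H : Set (Vc n)).Nonempty ∧ Module.finrank ℂ H.direction + 1 = n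

def arrSing {n : ℕ} (A : Finset (AffineSubspace ℂ (Vc n))) : Set (Vc n) :=
  ⋃ H ∈ A, (H : Set (Vc n))

noncomputable def interSub {n : ℕ} (s : Finset (AffineSubspace ℂ (Vc n))) :
    AffineSubspace ℂ (Vc n) :=
  sInf (s : Set (AffineSubspace ℂ (Vc n)))

/-- The augmented intersection poset `L̄(A)`: all nonempty intersections of
subfamilies of `A` (the empty subfamily giving the whole space `ℂⁿ = ⊤`). -/
def Lbar {n : ℕ} (A : Finset (AffineSubspace ℂ (Vc n))) : Set (AffineSubspace ℂ (Vc n)) :=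
  {G | (∃ s ⊆ A, G = interSub s) ∧ (G : Set (Vc n)).Nonempty}

/-- `U` is a small open convex set with minimum element `G = Min(U)`:
`U` is open and convex, `G` is the minimum of the set of elements of `L̄(A)`
meeting `U`, and a hyperplane of `A` meets `U` iff it contains `G`. -/
def IsSmallWith {n : ℕ} (A : Finset (AffineSubspace ℂ (Vc n))) (U : Set (Vc n))
    (G : AffineSubspace ℂ (Vc n)) : Prop :=
  IsOpen U ∧ Convex ℝ U ∧ G ∈ Lbar A ∧ ((G : Set (Vc n)) ∩ U).Nonempty ∧
    (∀ G' ∈ Lbar A, ((G' : Set (Vc n)) ∩ U).Nonempty → G ≤ G') ∧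
    (∀ H ∈ A, ((H : Set (Vc n)) ∩ U).Nonempty ↔ G ≤ H)

/-- `U` is a small open convex set with respect to the arrangement `A`. -/
def IsSmall {n : ℕ} (A : Finset (AffineSubspace ℂ (Vc n))) (U : Set (Vc n)) : Prop :=
  ∃ G, IsSmallWith A U G

/-- The central subarrangement `A_G` of hyperplanes of `A` containing `G`. -/
noncomputable def subArr {n : ℕ} (A : Finset (AffineSubspace ℂ (Vc n))) (G : AffineSubspace ℂ (Vc n)) :
    Finset (AffineSubspace ℂ (Vc n)) :=
  open Classical in A.filter (fun H => G ≤ H)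

/-!
Pick `x₀ ∈ G ∩ U`. Since `U` is open and convex, the gauge `γ` of `U - x₀` gives a
homeomorphism `U ≃ₜ ℂⁿ`, `x ↦ x₀ + (1 - γ (x - x₀))⁻¹ • (x - x₀)`, which slides every point
along its ray from `x₀`. Such a map preserves every affine subspace through `x₀`, in particular
every hyperplane of `A_G`. Inside `U` the singular sets of `A` and `A_G` agree, because a
hyperplane of `A` meeting `U` contains `G`; hence `U ∩ Σ(A)` goes onto `Σ(A_G)`.
-/

section Radial

variable {E : Type*} [NormedAddCommGroup E] [NormedSpace ℝ E]

theorem Convex.exists_homeomorph_smul {s : Set E} (hso : IsOpen s) (hsc : Convex ℝ s)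
    (hs₀ : (0 : E) ∈ s) : ∃ e : s ≃ₜ E, ∀ x : s, ∃ c : ℝ, 0 < c ∧ e x = c • (x : E) := by
  set γ := gauge s
  have hγ_cont : Continuous γ := continuous_gauge hsc (hso.mem_nhds hs₀)
  have hγ_lt_one : ∀ x, γ x < 1 ↔ x ∈ s := fun x ↦ by
    rw [gauge_lt_one_iff_mem_interior hsc (hso.mem_nhds hs₀), hso.interior_eq]
  have hγ_smul : ∀ {c : ℝ}, 0 ≤ c → ∀ x, γ (c • x) = c * γ x := fun hc x ↦
    gauge_smul_of_nonneg hc x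
  have h_one_sub_pos : ∀ x : s, 0 < 1 - γ x := fun x ↦ sub_pos.2 ((hγ_lt_one x).2 x.2)
  have h_one_add_pos : ∀ y, 0 < 1 + γ y := fun y ↦ by linarith [gauge_nonneg (s := s) y]
  -- `t ↦ t / (1 - t)` and `t ↦ t / (1 + t)` are inverse bijections `[0, 1) ≃ [0, ∞)`.
  have hγ_expand : ∀ x : s, 1 + γ ((1 - γ x)⁻¹ • (x : E)) = (1 - γ x)⁻¹ := fun x ↦ by
    have := (h_one_sub_pos x).ne'
    rw [hγ_smul (inv_pos.2 (h_one_sub_pos x)).le]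
    field_simp
    ring
  have hγ_shrink : ∀ y, 1 - γ ((1 + γ y)⁻¹ • y) = (1 + γ y)⁻¹ := fun y ↦ by
    have := (h_one_add_pos y).ne'
    rw [hγ_smul (inv_pos.2 (h_one_add_pos y)).le]
    field_simp
    ring
  have h_shrink_mem : ∀ y, (1 + γ y)⁻¹ • y ∈ s := fun y ↦ by
    rw [← hγ_lt_one, ← sub_pos, hγ_shrink]
    exact inv_pos.2 (h_one_add_pos y)
  refine ⟨
    { toFun := fun x ↦ (1 - γ x)⁻¹ • (x : E)
      invFun := fun y ↦ ⟨(1 + γ y)⁻¹ • y, h_shrink_mem y⟩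
      left_inv := fun x ↦ Subtype.ext <| by
        simp only [hγ_expand]
        exact inv_smul_smul₀ (inv_ne_zero (h_one_sub_pos x).ne') _
      right_inv := fun y ↦ by
        simp only [hγ_shrink]
        exact inv_smul_smul₀ (inv_ne_zero (h_one_add_pos y).ne') _
      continuous_toFun :=
        ((continuous_const.sub (hγ_cont.comp continuous_subtype_val)).inv₀
          fun x ↦ (h_one_sub_pos x).ne').smul continuous_subtype_val
      continuous_invFun :=
        (((continuous_const.add hγ_cont).inv₀ fun y ↦ (h_one_add_pos y).ne').smul
          continuous_id).subtype_mk _ },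
    fun x ↦ ⟨_, inv_pos.2 (h_one_sub_pos x), rfl⟩⟩

theorem Convex.exists_homeomorph_lineMap {U : Set E} (hUo : IsOpen U) (hUc : Convex ℝ U)
    {x₀ : E} (hx₀ : x₀ ∈ U) :
    ∃ e : U ≃ₜ E, ∀ x : U, ∃ c : ℝ, 0 < c ∧ e x = AffineMap.lineMap x₀ (x : E) c := by
  let τ := Homeomorph.addLeft x₀
  obtain ⟨e₀, he₀⟩ := (hUc.translate_preimage_right x₀).exists_homeomorph_smul
    (hUo.preimage τ.continuous) (by simpa [τ] using hx₀)
  refine ⟨(τ.sets (s := τ ⁻¹' U) rfl).symm.trans (e₀.trans τ), fun x ↦ ?_⟩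
  obtain ⟨c, hc, hx⟩ := he₀ ((τ.sets rfl).symm x)
  refine ⟨c, hc, ?_⟩
  simp only [Homeomorph.trans_apply, hx]
  change x₀ + c • (-x₀ + (x : E)) = AffineMap.lineMap x₀ (x : E) c
  rw [AffineMap.lineMap_apply_module', neg_add_eq_sub, add_comm]

end Radial

theorem AffineSubspace.lineMap_mem_iff {k V P : Type*} [Field k] [AddCommGroup V] [Module k V]
    [AddTorsor V P] {H : AffineSubspace k P} {x₀ : P} (hx₀ : x₀ ∈ H) {c : k} (hc : c ≠ 0)
    (x : P) : AffineMap.lineMap x₀ x c ∈ H ↔ x ∈ H := by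
  rw [AffineMap.lineMap_apply, H.vadd_mem_iff_mem_direction _ hx₀,
    Submodule.smul_mem_iff _ hc, H.vsub_right_mem_direction_iff_mem hx₀]

theorem Homeomorph.nonempty_diff_homeomorph_compl {X Y : Type*} [TopologicalSpace X]
    [TopologicalSpace Y] {U S : Set X} {T : Set Y} (e : U ≃ₜ Y)
    (he : ∀ x : U, e x ∈ T ↔ (x : X) ∈ S) : Nonempty (↥(U \ S) ≃ₜ ↥Tᶜ) :=
  ⟨(Homeomorph.setCongr (Subtype.image_preimage_coe U Sᶜ)).symm.trans <|
    (Topology.IsEmbedding.subtypeVal.homeomorphImage (Subtype.val ⁻¹' Sᶜ)).symm.trans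
    (e.subtype (q := (· ∈ Tᶜ)) fun x ↦ (he x).not.symm)⟩

theorem mem_arrSing {n : ℕ} {A : Finset (AffineSubspace ℂ (Vc n))} {x : Vc n} :
    x ∈ arrSing A ↔ ∃ H ∈ A, x ∈ H := by
  simp [arrSing]

theorem mem_subArr {n : ℕ} {A : Finset (AffineSubspace ℂ (Vc n))}
    {G H : AffineSubspace ℂ (Vc n)} : H ∈ subArr A G ↔ H ∈ A ∧ G ≤ H := by
  simp [subArr]

theorem mem_arrSing_subArr_iff {n : ℕ} {A : Finset (AffineSubspace ℂ (Vc n))} {U : Set (Vc n)}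
    {G : AffineSubspace ℂ (Vc n)} (hmeet : ∀ H ∈ A, ((H : Set (Vc n)) ∩ U).Nonempty → G ≤ H)
    {x : Vc n} (hx : x ∈ U) : x ∈ arrSing (subArr A G) ↔ x ∈ arrSing A := by
  simp only [mem_arrSing, mem_subArr]
  exact ⟨fun ⟨H, ⟨hH, _⟩, hxH⟩ ↦ ⟨H, hH, hxH⟩,
    fun ⟨H, hH, hxH⟩ ↦ ⟨H, ⟨hH, hmeet H hH ⟨x, hxH, hx⟩⟩, hxH⟩⟩

theorem lineMap_mem_arrSing_iff {n : ℕ} {A : Finset (AffineSubspace ℂ (Vc n))} {x₀ : Vc n}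
    (hx₀ : ∀ H ∈ A, x₀ ∈ H) {c : ℝ} (hc : c ≠ 0) (x : Vc n) :
    AffineMap.lineMap x₀ x c ∈ arrSing A ↔ x ∈ arrSing A := by
  have hℂ : AffineMap.lineMap x₀ x c = AffineMap.lineMap x₀ x (c : ℂ) := by
    simp only [AffineMap.lineMap_apply_module', Complex.coe_smul]
  simp only [mem_arrSing, hℂ]
  exact exists_congr fun H ↦ and_congr_right fun hH ↦
    AffineSubspace.lineMap_mem_iff (hx₀ H hH) (Complex.ofReal_ne_zero.2 hc) x

theorem stmt11_general {n : ℕ} (A : Finset (AffineSubspace ℂ (Vc n)))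
    (U : Set (Vc n)) (G : AffineSubspace ℂ (Vc n))
    (hU : IsSmallWith A U G) :
    (∃ e : U ≃ₜ Vc n,
        (e '' {x : U | (x : Vc n) ∈ arrSing A}) = arrSing (subArr A G)) ∧
      Nonempty (↥(U \ arrSing A) ≃ₜ ↥(arrSing (subArr A G))ᶜ) := by
  obtain ⟨hUo, hUc, -, ⟨x₀, hx₀G, hx₀U⟩, -, hmeet⟩ := hU
  obtain ⟨e, he⟩ := hUc.exists_homeomorph_lineMap hUo hx₀U
  have he_arrSing : ∀ x : U, e x ∈ arrSing (subArr A G) ↔ (x : Vc n) ∈ arrSing A := fun x ↦ by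
    obtain ⟨c, hc, hex⟩ := he x
    rw [hex, lineMap_mem_arrSing_iff (fun H hH ↦ (mem_subArr.1 hH).2 hx₀G) hc.ne',
      mem_arrSing_subArr_iff (fun H hH ↦ (hmeet H hH).1) x.2]
  refine ⟨⟨e, ?_⟩, e.nonempty_diff_homeomorph_compl he_arrSing⟩
  rw [e.image_eq_preimage_symm]
  ext y
  simpa using (he_arrSing (e.symm y)).symm

/-- **Statement 11.** Let `U` be a small open convex set with `G = Min(U) ∈ L(A)`
(i.e. `G ≠ ℂⁿ`).  Then there is a homeomorphism `U ≃ ℂⁿ` carrying `U ∩ Σ(A)` onto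
`Σ(A_G)`, where `A_G = {H ∈ A : G ⊆ H}`; in particular `U - Σ(A)` is homeomorphic to
the complement `M(A_G)` of the central arrangement `A_G`. -/
theorem stmt11 {n : ℕ} (A : Finset (AffineSubspace ℂ (Vc n)))
    (hA : ∀ H ∈ A, IsHyperplane H) (U : Set (Vc n)) (G : AffineSubspace ℂ (Vc n))
    (hU : IsSmallWith A U G) (hG : G ≠ ⊤) :
    (∃ e : U ≃ₜ Vc n,
        (e '' {x : U | (x : Vc n) ∈ arrSing A}) = arrSing (subArr A G)) ∧
      Nonempty (↥(U \ arrSing A) ≃ₜ ↥(arrSing (subArr A G))ᶜ) :=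
  stmt11_general A U G hU
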